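/- arXiv:1102.0843 — 2 statements merged into one kernel-verified Lean document; each statement's English description precedes it below -/
import Mathlib

section
/- Let S ⊆ ℝ² and let g : S → [0,∞) belong to L¹(S) ∩ L^p(S) for some p ∈ (2, ∞]. Then there is a constant C = C(p) such that for every x ∈ ℝ², ∫_S g(y)/|x−y| dy ≤ C ‖g‖_{L¹(S)}^{(p−2)/(2(p−1))} ‖g‖_{L^p(S)}^{p/(2(p−1))}. -/
open MeasureTheory Metric Set
open scoped ENNReal

noncomputable section

local notation "E2" => EuclideanSpace ℝ (Fin 2)

lemma key_ball {s : ℝ} (hs0 : 0 < s) (hs2 : s < 2) :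
    ∃ c : ℝ, 0 < c ∧ ∀ (x : E2) (R : ℝ), 0 < R →
      ∫⁻ y in Metric.ball x R, ENNReal.ofReal (dist x y ^ (-s)) ≤
        ENNReal.ofReal (c * R ^ (2 - s)) := by
  set B : ℝ≥0∞ := volume (Metric.ball (0 : E2) 1) with hB
  have hBfin : B < ∞ := measure_ball_lt_top
  have hBpos : 0 < B := measure_ball_pos _ _ one_pos
  refine ⟨B.toReal * (1 + s / (2 - s)), by
    have := ENNReal.toReal_pos hBpos.ne' hBfin.ne
    have h2s : 0 < 2 - s := by linarith
    positivity, ?_⟩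
  intro x R hR
  have h2s : 0 < 2 - s := by linarith
  set ν := volume.restrict (Metric.ball x R) with hν
  have hmeas : AEMeasurable (fun y : E2 => dist x y ^ (-s)) ν := by
    apply Measurable.aemeasurable
    fun_prop
  rw [lintegral_eq_lintegral_meas_le ν
    (Filter.Eventually.of_forall fun y => Real.rpow_nonneg dist_nonneg _) hmeas]
  set t₀ : ℝ := R ^ (-s) with ht₀
  have ht₀pos : 0 < t₀ := Real.rpow_pos_of_pos hR _
  calc ∫⁻ t in Ioi (0:ℝ), ν {a | t ≤ dist x a ^ (-s)}
      = ∫⁻ t in Ioc (0:ℝ) t₀ ∪ Ioi t₀, ν {a | t ≤ dist x a ^ (-s)} := by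
        rw [Ioc_union_Ioi_eq_Ioi ht₀pos.le]
    _ ≤ (∫⁻ t in Ioc (0:ℝ) t₀, ν {a | t ≤ dist x a ^ (-s)}) +
        ∫⁻ t in Ioi t₀, ν {a | t ≤ dist x a ^ (-s)} := lintegral_union_le _ _ _
    _ ≤ (ENNReal.ofReal (R ^ 2) * B) * ENNReal.ofReal t₀ +
        B * ENNReal.ofReal (s / (2 - s) * R ^ (2 - s)) := by
        gcongr
        · -- piece 1
          calc ∫⁻ t in Ioc (0:ℝ) t₀, ν {a | t ≤ dist x a ^ (-s)}
              ≤ ∫⁻ _ in Ioc (0:ℝ) t₀, (ENNReal.ofReal (R ^ 2) * B) := by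
                apply setLIntegral_mono' measurableSet_Ioc
                intro t _
                calc ν {a | t ≤ dist x a ^ (-s)} ≤ ν univ := measure_mono (subset_univ _)
                  _ = volume (Metric.ball x R) := by
                      rw [hν, Measure.restrict_apply_univ]
                  _ = ENNReal.ofReal (R ^ 2) * B := by
                      rw [Measure.addHaar_ball _ _ hR.le, finrank_euclideanSpace_fin]
            _ = (ENNReal.ofReal (R ^ 2) * B) * volume (Ioc (0:ℝ) t₀) := by
                rw [setLIntegral_const]
            _ = (ENNReal.ofReal (R ^ 2) * B) * ENNReal.ofReal t₀ := by
                rw [Real.volume_Ioc, sub_zero]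
        · -- piece 2
          have hsub : ∀ t : ℝ, 0 < t → {a : E2 | t ≤ dist x a ^ (-s)} ⊆
              Metric.closedBall x (t ^ (-s⁻¹)) := by
            intro t ht a ha
            simp only [mem_setOf_eq] at ha
            have hd : 0 < dist x a := by
              rcases eq_or_lt_of_le (dist_nonneg (x := x) (y := a)) with h | h
              · exfalso
                rw [← h, Real.zero_rpow (by simpa using hs0.ne')] at ha
                linarith
              · exact h
            have h1 : (dist x a ^ (-s)) ^ (-s⁻¹) ≤ t ^ (-s⁻¹) :=
              Real.rpow_le_rpow_of_nonpos ht ha (neg_nonpos.2 (inv_nonneg.2 hs0.le))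
            rw [← Real.rpow_mul hd.le, neg_mul_neg, mul_inv_cancel₀ hs0.ne',
              Real.rpow_one] at h1
            exact mem_closedBall'.2 h1
          calc ∫⁻ t in Ioi t₀, ν {a | t ≤ dist x a ^ (-s)}
              ≤ ∫⁻ t in Ioi t₀, ENNReal.ofReal (t ^ (-(2/s))) * B := by
                apply setLIntegral_mono' measurableSet_Ioi
                intro t ht
                have ht' : 0 < t := ht₀pos.trans ht
                calc ν {a | t ≤ dist x a ^ (-s)}
                    ≤ volume (Metric.closedBall x (t ^ (-s⁻¹))) :=
                      le_trans (le_trans (measure_mono (hsub t ht'))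
                        (Measure.restrict_le_self _)) le_rfl
                  _ = ENNReal.ofReal ((t ^ (-s⁻¹)) ^ 2) * B := by
                      rw [Measure.addHaar_closedBall _ _ (Real.rpow_nonneg ht'.le _),
                        finrank_euclideanSpace_fin]
                  _ = ENNReal.ofReal (t ^ (-(2/s))) * B := by
                      congr 2
                      rw [← Real.rpow_natCast (t ^ (-s⁻¹)) 2, ← Real.rpow_mul ht'.le]
                      congr 1
                      push_cast
                      field_simp
            _ = B * ∫⁻ t in Ioi t₀, ENNReal.ofReal (t ^ (-(2/s))) := by
                rw [lintegral_mul_const' B _ hBfin.ne, mul_comm]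
            _ ≤ B * ENNReal.ofReal (s / (2 - s) * R ^ (2 - s)) := by
                gcongr
                have ha : -(2/s) < -1 := by
                  rw [neg_lt_neg_iff]
                  rw [lt_div_iff₀ hs0]
                  linarith
                rw [← ofReal_integral_eq_lintegral_ofReal
                  (integrableOn_Ioi_rpow_of_lt ha ht₀pos)
                  (by filter_upwards [ae_restrict_mem measurableSet_Ioi] with t ht
                      exact Real.rpow_nonneg (ht₀pos.trans ht).le _),
                  integral_Ioi_rpow_of_lt ha ht₀pos]
                apply ENNReal.ofReal_le_ofReal
                apply le_of_eq
                have h1 : t₀ ^ (-(2/s) + 1) = R ^ (2 - s) := by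
                  rw [ht₀, ← Real.rpow_mul hR.le]
                  congr 1
                  field_simp
                  ring
                have h2 : -(2/s) + 1 = -((2-s)/s) := by field_simp; ring
                rw [h1, h2, div_neg, neg_div, neg_neg, div_div_eq_mul_div]
                ring
    _ ≤ ENNReal.ofReal (B.toReal * (1 + s / (2 - s)) * R ^ (2 - s)) := by
        have hBr : B = ENNReal.ofReal B.toReal := (ENNReal.ofReal_toReal hBfin.ne).symm
        have hBt : 0 ≤ B.toReal := ENNReal.toReal_nonneg
        rw [hBr, ← ENNReal.ofReal_mul (by positivity), ← ENNReal.ofReal_mul (by positivity),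
          ← ENNReal.ofReal_mul hBt, ← ENNReal.ofReal_add (by positivity) (by positivity)]
        apply ENNReal.ofReal_le_ofReal
        rw [ENNReal.toReal_ofReal hBt]
        have hkey : R ^ 2 * t₀ = R ^ (2 - s) := by
          rw [ht₀, ← Real.rpow_natCast R 2, ← Real.rpow_add hR]
          norm_num [sub_eq_add_neg]
        apply le_of_eq
        rw [mul_comm (R ^ 2) B.toReal, mul_assoc, hkey]
        ring

theorem stmt1 (p : ℝ≥0∞) (hp : 2 < p) :
    ∃ C > (0 : ℝ), ∀ S : Set (EuclideanSpace ℝ (Fin 2)), MeasurableSet S →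
      ∀ g : EuclideanSpace ℝ (Fin 2) → ℝ, (∀ y, 0 ≤ g y) →
        MemLp g 1 (volume.restrict S) → MemLp g p (volume.restrict S) →
        ∀ x : EuclideanSpace ℝ (Fin 2),
          (∫ y in S, g y / dist x y) ≤
            C * (eLpNorm g 1 (volume.restrict S)).toReal ^
                  (if p = ⊤ then (1/2 : ℝ) else (p.toReal - 2) / (2 * (p.toReal - 1))) *
              (eLpNorm g p (volume.restrict S)).toReal ^
                  (if p = ⊤ then (1/2 : ℝ) else p.toReal / (2 * (p.toReal - 1))) := by
  set a : ℝ := if p = ⊤ then (1/2 : ℝ) else (p.toReal - 2) / (2 * (p.toReal - 1)) with hadef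
  set b : ℝ := if p = ⊤ then (1/2 : ℝ) else p.toReal / (2 * (p.toReal - 1)) with hbdef
  set s : ℝ := if p = ⊤ then (1 : ℝ) else p.toReal / (p.toReal - 1) with hsdef
  have hP : p ≠ ⊤ → 2 < p.toReal := by
    intro hpt
    have h := (ENNReal.toReal_lt_toReal (by norm_num) hpt).2 hp
    simpa using h
  have hfacts : 0 < s ∧ s < 2 ∧ 0 < b ∧ 0 ≤ a ∧ a + b = 1 ∧ b * ((2 - s)/s) = a := by
    by_cases hpt : p = ⊤
    · simp only [hadef, hbdef, hsdef, hpt, if_pos rfl]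
      norm_num
    · have hP2 := hP hpt
      simp only [hadef, hbdef, hsdef, if_neg hpt]
      set P := p.toReal
      have h1 : 0 < P - 1 := by linarith
      refine ⟨by positivity, ?_, by positivity,
        div_nonneg (by linarith) (by linarith), by field_simp; ring, ?_⟩
      · rw [div_lt_iff₀ h1]; linarith
      · field_simp
        ring
  obtain ⟨hs0, hs2, hb, ha, hab, hba⟩ := hfacts
  obtain ⟨c, hc, hkey⟩ := key_ball hs0 hs2
  refine ⟨c ^ s⁻¹ + 1, by positivity, ?_⟩
  intro S hS g hg hg1 hgp x
  set ν := volume.restrict S with hν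
  set n1 := (eLpNorm g 1 ν).toReal with hn1def
  set np := (eLpNorm g p ν).toReal with hnpdef
  set C := c ^ s⁻¹ + 1 with hCdef
  have hC : 0 < C := by positivity
  have hRHS : 0 ≤ C * n1 ^ a * np ^ b := by positivity
  have hgm : AEMeasurable g ν := hg1.aestronglyMeasurable.aemeasurable
  have main : ∫⁻ y, ENNReal.ofReal (g y / dist x y) ∂ν ≤
      ENNReal.ofReal (C * n1 ^ a * np ^ b) := by
    by_cases h0 : eLpNorm g 1 ν = 0
    · have hz : g =ᵐ[ν] 0 :=
        (eLpNorm_eq_zero_iff hg1.aestronglyMeasurable one_ne_zero).mp h0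
      have : (fun y => ENNReal.ofReal (g y / dist x y)) =ᵐ[ν] 0 := by
        filter_upwards [hz] with y hy
        simp [Pi.zero_apply] at hy ⊢
        simp [hy]
      rw [lintegral_congr_ae this]
      simp
    by_cases hp0 : eLpNorm g p ν = 0
    · have hz : g =ᵐ[ν] 0 :=
        (eLpNorm_eq_zero_iff hg1.aestronglyMeasurable (by positivity)).mp hp0
      have : (fun y => ENNReal.ofReal (g y / dist x y)) =ᵐ[ν] 0 := by
        filter_upwards [hz] with y hy
        simp [Pi.zero_apply] at hy ⊢
        simp [hy]
      rw [lintegral_congr_ae this]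
      simp
    have hn1 : 0 < n1 := ENNReal.toReal_pos h0 hg1.2.ne
    have hnp : 0 < np := ENNReal.toReal_pos hp0 hgp.2.ne
    have hN1 : eLpNorm g 1 ν = ENNReal.ofReal n1 := by
      rw [hn1def, ENNReal.ofReal_toReal hg1.2.ne]
    have hNp : eLpNorm g p ν = ENNReal.ofReal np := by
      rw [hnpdef, ENNReal.ofReal_toReal hgp.2.ne]
    set R : ℝ := (n1 / np) ^ b with hRdef
    have hR : 0 < R := Real.rpow_pos_of_pos (div_pos hn1 hnp) _
    -- lintegral of g equals eLpNorm 1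
    have hL1 : ∫⁻ y, ENNReal.ofReal (g y) ∂ν = eLpNorm g 1 ν := by
      rw [eLpNorm_one_eq_lintegral_enorm]
      apply lintegral_congr
      intro y
      rw [← ofReal_norm, Real.norm_of_nonneg (hg y)]
    -- far bound
    have far : ∫⁻ y in (Metric.ball x R)ᶜ, ENNReal.ofReal (g y / dist x y) ∂ν ≤
        ENNReal.ofReal R⁻¹ * eLpNorm g 1 ν := by
      calc ∫⁻ y in (Metric.ball x R)ᶜ, ENNReal.ofReal (g y / dist x y) ∂ν
          ≤ ∫⁻ y in (Metric.ball x R)ᶜ, ENNReal.ofReal (R⁻¹ * g y) ∂ν := by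
            apply setLIntegral_mono' measurableSet_ball.compl
            intro y hy
            apply ENNReal.ofReal_le_ofReal
            have hdy : R ≤ dist x y := by
              simp only [Set.mem_compl_iff, Metric.mem_ball, not_lt, dist_comm] at hy
              exact hy
            rw [div_eq_mul_inv, mul_comm R⁻¹]
            apply mul_le_mul_of_nonneg_left _ (hg y)
            exact inv_anti₀ hR hdy
        _ ≤ ∫⁻ y, ENNReal.ofReal (R⁻¹ * g y) ∂ν := setLIntegral_le_lintegral _ _
        _ = ENNReal.ofReal R⁻¹ * ∫⁻ y, ENNReal.ofReal (g y) ∂ν := by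
            simp_rw [ENNReal.ofReal_mul (by positivity : (0:ℝ) ≤ R⁻¹)]
            rw [lintegral_const_mul' _ _ ENNReal.ofReal_ne_top]
        _ = ENNReal.ofReal R⁻¹ * eLpNorm g 1 ν := by rw [hL1]
    -- near bound
    have near : ∫⁻ y in Metric.ball x R, ENNReal.ofReal (g y / dist x y) ∂ν ≤
        eLpNorm g p ν * ENNReal.ofReal ((c * R ^ (2 - s)) ^ s⁻¹) := by
      have hpt_int : ∀ y, ENNReal.ofReal (g y / dist x y) =
          ENNReal.ofReal (g y) * ENNReal.ofReal (dist x y ^ (-1 : ℝ)) := fun y => by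
        rw [Real.rpow_neg_one, div_eq_mul_inv, ENNReal.ofReal_mul (hg y)]
      have hmono : ∀ f : E2 → ℝ≥0∞,
          (∫⁻ y in Metric.ball x R, f y ∂ν) ≤ ∫⁻ y in Metric.ball x R, f y := by
        intro f
        apply lintegral_mono' _ le_rfl
        rw [hν, Measure.restrict_restrict measurableSet_ball]
        exact Measure.restrict_mono Set.inter_subset_left le_rfl
      have hballs : ∫⁻ y in Metric.ball x R, ENNReal.ofReal (dist x y ^ (-s)) ∂ν ≤
          ENNReal.ofReal (c * R ^ (2 - s)) :=
        le_trans (hmono _) (hkey x R hR)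
      by_cases hpt : p = ⊤
      · have hs1 : s = 1 := by simp [hsdef, hpt]
        have hae : ∀ᵐ y ∂(ν.restrict (Metric.ball x R)),
            ENNReal.ofReal (g y) ≤ eLpNorm g p ν := by
          have h := ae_le_eLpNormEssSup (f := g) (μ := ν)
          rw [hpt, eLpNorm_exponent_top]
          filter_upwards [ae_restrict_of_ae h] with y hy
          rwa [← ofReal_norm, Real.norm_of_nonneg (hg y)] at hy
        calc ∫⁻ y in Metric.ball x R, ENNReal.ofReal (g y / dist x y) ∂ν
            ≤ ∫⁻ y in Metric.ball x R,
              eLpNorm g p ν * ENNReal.ofReal (dist x y ^ (-s)) ∂ν := by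
              apply lintegral_mono_ae
              filter_upwards [hae] with y hy
              rw [hpt_int y, hs1]
              exact mul_le_mul_left hy _
          _ = eLpNorm g p ν *
              ∫⁻ y in Metric.ball x R, ENNReal.ofReal (dist x y ^ (-s)) ∂ν :=
              lintegral_const_mul' _ _ hgp.2.ne
          _ ≤ eLpNorm g p ν * ENNReal.ofReal (c * R ^ (2 - s)) := by gcongr
          _ = eLpNorm g p ν * ENNReal.ofReal ((c * R ^ (2 - s)) ^ s⁻¹) := by
              rw [hs1]
              norm_num
      · have hP2 := hP hpt
        have hpq : (p.toReal).HolderConjugate s := by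
          have h := Real.HolderConjugate.conjExponent (p := p.toReal) (by linarith)
          simpa [hsdef, hpt, Real.conjExponent] using h
        have hf : AEMeasurable (fun y => ENNReal.ofReal (g y))
            (ν.restrict (Metric.ball x R)) := hgm.restrict.ennreal_ofReal
        have hh : AEMeasurable (fun y : E2 => ENNReal.ofReal (dist x y ^ (-1 : ℝ)))
            (ν.restrict (Metric.ball x R)) := by
          apply Measurable.aemeasurable
          fun_prop
        have hold := ENNReal.lintegral_mul_le_Lp_mul_Lq (ν.restrict (Metric.ball x R))
          hpq hf hh
        have fact1 : (∫⁻ y, ENNReal.ofReal (g y) ^ p.toReal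
            ∂(ν.restrict (Metric.ball x R))) ^ (1 / p.toReal) ≤ eLpNorm g p ν := by
          have hsn : eLpNorm g p ν =
              (∫⁻ y, ENNReal.ofReal (g y) ^ p.toReal ∂ν) ^ (1 / p.toReal) := by
            rw [eLpNorm_eq_lintegral_rpow_enorm_toReal (by positivity) hpt]
            congr 1
            apply lintegral_congr
            intro y
            rw [← ofReal_norm, Real.norm_of_nonneg (hg y)]
          rw [hsn]
          apply ENNReal.rpow_le_rpow _ (by positivity)
          exact lintegral_mono' Measure.restrict_le_self le_rfl
        have fact2 : (∫⁻ y, ENNReal.ofReal (dist x y ^ (-1 : ℝ)) ^ s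
            ∂(ν.restrict (Metric.ball x R))) ^ (1 / s) ≤
            ENNReal.ofReal ((c * R ^ (2 - s)) ^ s⁻¹) := by
          have hps : ∀ y : E2, ENNReal.ofReal (dist x y ^ (-1 : ℝ)) ^ s =
              ENNReal.ofReal (dist x y ^ (-s)) := fun y => by
            rw [ENNReal.ofReal_rpow_of_nonneg (Real.rpow_nonneg dist_nonneg _) hs0.le,
              ← Real.rpow_mul dist_nonneg, neg_one_mul]
          simp_rw [hps]
          rw [← ENNReal.ofReal_rpow_of_nonneg (by positivity) (by positivity : (0:ℝ) ≤ s⁻¹),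
            one_div]
          exact ENNReal.rpow_le_rpow hballs (by positivity)
        calc ∫⁻ y in Metric.ball x R, ENNReal.ofReal (g y / dist x y) ∂ν
            = ∫⁻ y, ((fun y => ENNReal.ofReal (g y)) *
                (fun y : E2 => ENNReal.ofReal (dist x y ^ (-1 : ℝ)))) y
                ∂(ν.restrict (Metric.ball x R)) := by
              apply lintegral_congr
              intro y
              rw [Pi.mul_apply, hpt_int y]
          _ ≤ _ := hold
          _ ≤ eLpNorm g p ν * ENNReal.ofReal ((c * R ^ (2 - s)) ^ s⁻¹) :=
              mul_le_mul' fact1 fact2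
    calc ∫⁻ y, ENNReal.ofReal (g y / dist x y) ∂ν
        = (∫⁻ y in Metric.ball x R, ENNReal.ofReal (g y / dist x y) ∂ν) +
          ∫⁻ y in (Metric.ball x R)ᶜ, ENNReal.ofReal (g y / dist x y) ∂ν :=
          (lintegral_add_compl _ measurableSet_ball).symm
      _ ≤ eLpNorm g p ν * ENNReal.ofReal ((c * R ^ (2 - s)) ^ s⁻¹) +
          ENNReal.ofReal R⁻¹ * eLpNorm g 1 ν := add_le_add near far
      _ ≤ ENNReal.ofReal (C * n1 ^ a * np ^ b) := by
          rw [hN1, hNp, ← ENNReal.ofReal_mul (by positivity),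
            ← ENNReal.ofReal_mul (by positivity),
            ← ENNReal.ofReal_add (by positivity) (by positivity)]
          apply ENNReal.ofReal_le_ofReal
          have hdiv : 0 < n1 / np := div_pos hn1 hnp
          have e1 : R ^ ((2 - s) / s) = (n1 / np) ^ a := by
            rw [hRdef, ← Real.rpow_mul hdiv.le, hba]
          have e2 : (c * R ^ (2 - s)) ^ s⁻¹ = c ^ s⁻¹ * R ^ ((2 - s) / s) := by
            rw [Real.mul_rpow hc.le (Real.rpow_nonneg hR.le _),
              ← Real.rpow_mul hR.le, ← div_eq_mul_inv]
          have e3 : np * (n1 / np) ^ a = n1 ^ a * np ^ b := by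
            rw [Real.div_rpow hn1.le hnp.le,
              show b = 1 - a by linarith, Real.rpow_sub hnp, Real.rpow_one]
            have h1 : (0:ℝ) < np ^ a := Real.rpow_pos_of_pos hnp a
            field_simp
          have e4 : R⁻¹ * n1 = n1 ^ a * np ^ b := by
            rw [hRdef, Real.div_rpow hn1.le hnp.le,
              show a = 1 - b by linarith, Real.rpow_sub hn1, Real.rpow_one]
            have h1 : (0:ℝ) < n1 ^ b := Real.rpow_pos_of_pos hn1 b
            have h2 : (0:ℝ) < np ^ b := Real.rpow_pos_of_pos hnp b
            field_simp
          apply le_of_eq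
          calc np * (c * R ^ (2 - s)) ^ s⁻¹ + R⁻¹ * n1
              = c ^ s⁻¹ * (np * (n1 / np) ^ a) + n1 ^ a * np ^ b := by
                rw [e2, e1, e4]; ring
            _ = C * n1 ^ a * np ^ b := by rw [e3, hCdef]; ring
  by_cases hInt : Integrable (fun y => g y / dist x y) ν
  · rw [MeasureTheory.integral_eq_lintegral_of_nonneg_ae
      (Filter.Eventually.of_forall fun y => div_nonneg (hg y) dist_nonneg)
      hInt.aestronglyMeasurable]
    exact ENNReal.toReal_le_of_le_ofReal hRHS main
  · rw [MeasureTheory.integral_undef hInt]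
    exact hRHS
end
end

section
/- Let g_n : Δ → ℂ be univalent maps on the exterior Δ of the closed unit disk, continuous up to the boundary, such that ‖f_n − Id‖_{L^∞} → 0 where f_n(z) = 1/g_n(1/z), and such that there exists R₀ > 1 with the complements E_n := ℂ \ g_n(Δ) contained in B(0,R₀). Then ‖(g_n(z) − z)/|z|‖_{L^∞(Δ_n)} → 0, where Δ_n is the domain of g_n. -/
open Metric Set Filter Complex
open scoped Topology

theorem stmt19 (R₀ : ℝ) (hR₀ : 1 < R₀) (g : ℕ → ℂ → ℂ)
    (hholo : ∀ n, DifferentiableOn ℂ (g n) {z : ℂ | 1 < ‖z‖})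
    (hinj : ∀ n, Set.InjOn (g n) {z : ℂ | 1 < ‖z‖})
    (hcont : ∀ n, ContinuousOn (g n) {z : ℂ | 1 ≤ ‖z‖})
    (hE : ∀ n, (g n '' {z : ℂ | 1 < ‖z‖})ᶜ ⊆ Metric.ball (0 : ℂ) R₀)
    (hf : ∀ δ > (0:ℝ), ∃ N : ℕ, ∀ n ≥ N, ∀ z : ℂ, 0 < ‖z‖ → ‖z‖ < 1 →
      ‖(g n z⁻¹)⁻¹ - z‖ ≤ δ) :
    ∀ δ > (0:ℝ), ∃ N : ℕ, ∀ n ≥ N, ∀ z : ℂ, 1 < ‖z‖ → ‖g n z - z‖ / ‖z‖ ≤ δ := by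
  have hR₀0 : (0:ℝ) < R₀ := lt_trans one_pos hR₀
  intro δ hδ
  set ε : ℝ := min (δ/4) (min (4⁻¹) R₀⁻¹) with hεdef
  have hε0 : 0 < ε := by positivity
  have hε4 : ε ≤ 4⁻¹ := le_trans (min_le_right _ _) (min_le_left _ _)
  have hεR : ε ≤ R₀⁻¹ := le_trans (min_le_right _ _) (min_le_right _ _)
  have hεδ : 4 * ε ≤ δ := by
    have := min_le_left (δ/4) (min (4⁻¹) R₀⁻¹)
    linarith
  obtain ⟨N, hN⟩ := hf ε hε0
  refine ⟨N, fun n hn z hz => ?_⟩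
  have hopenU : IsOpen {z : ℂ | 1 < ‖z‖} := isOpen_lt continuous_const continuous_norm
  -- the bound from hf, rephrased
  have hfb : ∀ y : ℂ, y ≠ 0 → ‖y‖ < 1 → ‖(g n y⁻¹)⁻¹ - y‖ ≤ ε := fun y hy0 hy1 =>
    hN n hn y (norm_pos_iff.2 hy0) hy1
  -- g n has no zeroes on the exterior disk
  have hA : ∀ w : ℂ, 1 < ‖w‖ → g n w ≠ 0 := by
    intro w hw hzero
    have hwmem : w ∈ {z : ℂ | 1 < ‖z‖} := hw
    have han : AnalyticAt ℂ (g n) w := (hholo n).analyticAt (hopenU.mem_nhds hwmem)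
    rcases han.eventually_eq_zero_or_eventually_ne_zero with hcase | hcase
    · -- g n ≡ 0 near w : contradicts injectivity
      obtain ⟨r, hr0, hr⟩ := Metric.eventually_nhds_iff_ball.1 hcase
      have hww : (0:ℝ) < ‖w‖ := lt_trans one_pos hw
      set t : ℝ := r / (2*‖w‖) with htdef
      have ht0 : 0 < t := by positivity
      set w' : ℂ := ((1 + t : ℝ) : ℂ) * w with hw'def
      have hsub : w' - w = ((t : ℝ) : ℂ) * w := by rw [hw'def]; push_cast; ring
      have hne : w' ≠ w := by
        intro h
        rw [h, sub_self] at hsub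
        rcases mul_eq_zero.1 hsub.symm with h1 | h2
        · have h1' : t = 0 := by exact_mod_cast h1
          linarith
        · rw [h2] at hww; simp at hww
      have hdist : dist w' w < r := by
        rw [dist_eq_norm, hsub, norm_mul, Complex.norm_real, Real.norm_eq_abs,
          abs_of_pos ht0, htdef]
        rw [div_mul_eq_mul_div, mul_comm, div_lt_iff₀ (by positivity)]
        nlinarith
      have hw'norm : 1 < ‖w'‖ := by
        have hnn : ‖w'‖ = (1 + t) * ‖w‖ := by
          rw [hw'def, norm_mul, Complex.norm_real, Real.norm_eq_abs,
            abs_of_pos (by linarith)]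
        rw [hnn]
        nlinarith
      have h1 : g n w' = 0 := hr w' (Metric.mem_ball.2 hdist)
      have := hinj n hw'norm hwmem (by rw [h1, hzero])
      exact hne this
    · -- g n nonzero but small near w : makes ‖(g n ·)⁻¹‖ blow up
      have hcont' : ContinuousAt (g n) w :=
        ((hholo n).differentiableAt (hopenU.mem_nhds hwmem)).continuousAt
      have htend : Tendsto (g n) (𝓝 w) (𝓝 0) := hzero ▸ hcont'
      have hsmall : ∀ᶠ ζ in 𝓝 w, ‖g n ζ‖ < (1 + ε)⁻¹ := by
        have : (0:ℝ) < (1+ε)⁻¹ := by positivity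
        filter_upwards [htend (Metric.ball_mem_nhds 0 this)] with ζ hζ
        simpa [dist_eq_norm] using hζ
      have hout : ∀ᶠ ζ in 𝓝 w, 1 < ‖ζ‖ := hopenU.eventually_mem hwmem
      have : ∀ᶠ ζ in 𝓝[≠] w, False := by
        filter_upwards [hcase, eventually_nhdsWithin_of_eventually_nhds hsmall,
          eventually_nhdsWithin_of_eventually_nhds hout] with ζ h1 h2 h3
        have hζ0 : ζ ≠ 0 := by
          intro h; rw [h] at h3; simp at h3; linarith
        have hy0 : (ζ⁻¹ : ℂ) ≠ 0 := inv_ne_zero hζ0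
        have hy1 : ‖(ζ⁻¹ : ℂ)‖ < 1 := by
          rw [norm_inv]; rw [inv_lt_one_iff₀]; right; exact h3
        have hb := hfb ζ⁻¹ hy0 hy1
        rw [inv_inv] at hb
        have h5 : ‖(g n ζ)⁻¹‖ ≤ ‖ζ⁻¹‖ + ε := by
          calc ‖(g n ζ)⁻¹‖ ≤ ‖(g n ζ)⁻¹ - ζ⁻¹‖ + ‖(ζ⁻¹ : ℂ)‖ := by
                have := norm_sub_norm_le ((g n ζ)⁻¹) (ζ⁻¹ : ℂ); linarith [norm_nonneg ((g n ζ)⁻¹ - ζ⁻¹)]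
            _ ≤ ε + ‖(ζ⁻¹ : ℂ)‖ := by linarith
            _ = ‖(ζ⁻¹ : ℂ)‖ + ε := by ring
        have h6 : 1 + ε < ‖(g n ζ)⁻¹‖ := by
          rw [norm_inv]
          rw [lt_inv_comm₀ (by positivity) (norm_pos_iff.2 h1)]
          exact h2
        have : ‖(ζ⁻¹ : ℂ)‖ ≤ 1 := le_of_lt hy1
        linarith
      rcases this.exists with ⟨_, h⟩
      exact h
  -- the inverted map
  set f : ℂ → ℂ := fun y => (g n y⁻¹)⁻¹ with hfdef
  have hfd : DifferentiableOn ℂ f (ball (0:ℂ) 1 \ {0}) := by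
    intro y hy
    obtain ⟨hy1, hy0⟩ := hy
    have hy0 : y ≠ 0 := hy0
    have hy1 : ‖y‖ < 1 := by simpa using hy1
    have hyi : 1 < ‖y⁻¹‖ := by
      rw [norm_inv]; rw [one_lt_inv_iff₀]; exact ⟨norm_pos_iff.2 hy0, hy1⟩
    have h1 : DifferentiableAt ℂ (fun y : ℂ => y⁻¹) y := differentiableAt_inv hy0
    have h2 : DifferentiableAt ℂ (g n) y⁻¹ := (hholo n).differentiableAt (hopenU.mem_nhds hyi)
    have h3 : DifferentiableAt ℂ (fun y : ℂ => g n y⁻¹) y := h2.comp y h1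
    have h4 : DifferentiableAt ℂ f y := h3.inv (hA _ hyi)
    exact h4.differentiableWithinAt
  have hfbd : ∀ y ∈ ball (0:ℂ) 1 \ {0}, ‖f y‖ ≤ 1 + ε := by
    intro y hy
    obtain ⟨hy1, hy0⟩ := hy
    have hy0 : y ≠ 0 := hy0
    have hy1 : ‖y‖ < 1 := by simpa using hy1
    have := hfb y hy0 hy1
    calc ‖f y‖ ≤ ‖f y - y‖ + ‖y‖ := by
          have := norm_sub_norm_le (f y) y; linarith [norm_nonneg (f y - y)]
      _ ≤ ε + 1 := by linarith
      _ = 1 + ε := by ring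
  set F : ℂ → ℂ := Function.update f 0 (limUnder (𝓝[≠] (0:ℂ)) f) with hFdef
  have hFd : DifferentiableOn ℂ F (ball (0:ℂ) 1) := by
    apply Complex.differentiableOn_update_limUnder_of_bddAbove
      (Metric.ball_mem_nhds 0 one_pos) hfd
    exact ⟨1 + ε, fun x hx => by
      obtain ⟨y, hy, rfl⟩ := hx
      exact hfbd y hy⟩
  have hFeq : ∀ y : ℂ, y ≠ 0 → F y = f y := fun y hy => Function.update_of_ne hy _ _
  set c : ℂ := F 0 with hcdef
  have hFc : ContinuousAt F 0 :=
    (hFd.differentiableAt (isOpen_ball.mem_nhds (by simp))).continuousAt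
  have hftend : Tendsto f (𝓝[≠] (0:ℂ)) (𝓝 c) := by
    refine (hFc.tendsto.mono_left nhdsWithin_le_nhds).congr' ?_
    filter_upwards [self_mem_nhdsWithin] with y hy
    exact hFeq y hy
  have hcnorm : ‖c‖ ≤ ε := by
    have h1 : Tendsto (fun y => ‖f y - y‖) (𝓝[≠] (0:ℂ)) (𝓝 ‖c - 0‖) := by
      exact ((hftend.sub (tendsto_nhdsWithin_of_tendsto_nhds tendsto_id)).norm)
    rw [sub_zero] at h1
    refine le_of_tendsto h1 ?_
    have hball : ∀ᶠ y in 𝓝[≠] (0:ℂ), ‖y‖ < 1 := by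
      apply eventually_nhdsWithin_of_eventually_nhds
      have : (ball (0:ℂ) 1) ∈ 𝓝 (0:ℂ) := Metric.ball_mem_nhds 0 one_pos
      filter_upwards [this] with y hy; simpa using hy
    filter_upwards [hball, self_mem_nhdsWithin] with y hy1 hy0
    exact hfb y hy0 hy1
  -- F 0 = 0
  have hc0 : c = 0 := by
    by_contra hc
    -- c is attained by f
    have himg : c⁻¹ ∈ g n '' {z : ℂ | 1 < ‖z‖} := by
      by_contra h
      have := hE n h
      rw [Metric.mem_ball, dist_zero_right, norm_inv] at this
      have h1 : ‖c‖⁻¹ ≥ R₀ := by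
        rw [ge_iff_le, le_inv_comm₀ hR₀0 (norm_pos_iff.2 hc)]
        exact le_trans hcnorm hεR
      linarith
    obtain ⟨a', ha', hga'⟩ := himg
    have ha'1 : 1 < ‖a'‖ := ha'
    have ha'0 : a' ≠ 0 := by intro h; rw [h] at ha'1; simp at ha'1; linarith
    set a : ℂ := a'⁻¹ with hadef
    have ha0 : a ≠ 0 := inv_ne_zero ha'0
    have ha1 : ‖a‖ < 1 := by
      rw [hadef, norm_inv]; rw [inv_lt_one_iff₀]; right; exact ha'1
    have hfa : f a = c := by
      rw [hfdef]; simp only [hadef, inv_inv]; rw [hga', inv_inv]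
    have haball : a ∈ ball (0:ℂ) 1 := by simpa using ha1
    have hFa : F a = c := by rw [hFeq a ha0]; exact hfa
    -- identity-type contradiction helper
    have hy₀norm : ‖((3/4 : ℝ) : ℂ)‖ = 3/4 := by
      rw [Complex.norm_real, Real.norm_eq_abs]
      rw [abs_of_pos]
      all_goals norm_num
    have hy₀ : ((3/4 : ℝ) : ℂ) ∈ ball (0:ℂ) 1 := by
      rw [mem_ball_zero_iff, hy₀norm]; norm_num
    have hnotconst : ∀ p : ℂ, p ∈ ball (0:ℂ) 1 → F p = c → ¬ (∀ᶠ ζ in 𝓝 p, F ζ = F p) := by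
      intro p hp hpc hev
      have hEq : EqOn F (fun _ => F p) (ball (0:ℂ) 1) := by
        apply AnalyticOnNhd.eqOn_of_preconnected_of_eventuallyEq
          (hFd.analyticOnNhd isOpen_ball) analyticOnNhd_const
          (convex_ball (0:ℂ) 1).isPreconnected hp
        exact hev
      have h1 : F ((3/4 : ℝ) : ℂ) = c := by rw [hEq hy₀, hpc]
      have h2 : ‖F ((3/4 : ℝ) : ℂ)‖ ≥ 3/4 - ε := by
        have hne : ((3/4 : ℝ) : ℂ) ≠ 0 := by
          intro h
          rw [h, norm_zero] at hy₀norm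
          norm_num at hy₀norm
        rw [hFeq _ hne]
        have := hfb _ hne (by rw [hy₀norm]; norm_num)
        have h3 := norm_sub_norm_le (((3/4 : ℝ) : ℂ)) (f ((3/4 : ℝ) : ℂ))
        rw [norm_sub_rev] at this
        rw [hy₀norm] at h3
        linarith
      rw [h1] at h2
      have : (0:ℝ) < 3/4 - 2*ε := by linarith [hε4]
      linarith [hcnorm]
    -- open mapping at 0 and at a
    have hoF : ∀ p : ℂ, p ∈ ball (0:ℂ) 1 → F p = c → 𝓝 c ≤ map F (𝓝 p) := by
      intro p hp hpc
      have := (hFd.analyticAt (isOpen_ball.mem_nhds hp)).eventually_constant_or_nhds_le_map_nhds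
      rcases this with h | h
      · exact absurd h (hnotconst p hp hpc)
      · rwa [hpc] at h
    have h0le := hoF 0 (by simp) rfl
    have hale := hoF a haball hFa
    set r : ℝ := min (‖a‖/2) ((1 - ‖a‖)/2) with hrdef
    have hr0 : 0 < r := by
      have : (0:ℝ) < ‖a‖ := norm_pos_iff.2 ha0
      apply lt_min <;> linarith
    have hs₁ : F '' ball 0 r ∈ 𝓝 c := by
      apply h0le
      rw [mem_map]
      exact Filter.mem_of_superset (Metric.ball_mem_nhds 0 hr0) (subset_preimage_image F _)
    have hs₂ : F '' ball a r ∈ 𝓝 c := by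
      apply hale
      rw [mem_map]
      exact Filter.mem_of_superset (Metric.ball_mem_nhds a hr0) (subset_preimage_image F _)
    have hmem : (F '' ball 0 r ∩ F '' ball a r) ∩ {c}ᶜ ∈ 𝓝[≠] c := by
      apply inter_mem
      · exact mem_nhdsWithin_of_mem_nhds (inter_mem hs₁ hs₂)
      · exact self_mem_nhdsWithin
    obtain ⟨w, ⟨⟨hw1, hw2⟩, hwc⟩⟩ := Filter.nonempty_of_mem hmem
    obtain ⟨y₁, hy₁, hwy₁⟩ := hw1
    obtain ⟨y₂, hy₂, hwy₂⟩ := hw2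
    have hy₁0 : y₁ ≠ 0 := by
      intro h; rw [h] at hwy₁; rw [← hcdef] at hwy₁
      exact hwc (Set.mem_singleton_iff.2 hwy₁.symm)
    have hy₁n : ‖y₁‖ < ‖a‖/2 := by
      have := mem_ball_zero_iff.1 hy₁
      exact lt_of_lt_of_le this (min_le_left _ _)
    have hy₂n : ‖a‖/2 < ‖y₂‖ := by
      have h1 : ‖y₂ - a‖ < r := by rwa [mem_ball, dist_eq_norm] at hy₂
      have h2 := norm_sub_norm_le a y₂
      rw [norm_sub_rev] at h2
      have h3 : r ≤ ‖a‖/2 := min_le_left _ _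
      linarith
    have hy₂0 : y₂ ≠ 0 := by
      intro h; rw [h, norm_zero] at hy₂n
      have : (0:ℝ) < ‖a‖ := norm_pos_iff.2 ha0
      linarith
    have hy₂1 : ‖y₂‖ < 1 := by
      have h1 : ‖y₂ - a‖ < r := by rwa [mem_ball, dist_eq_norm] at hy₂
      have h2 := norm_add_le (y₂ - a) a
      rw [sub_add_cancel] at h2
      have h3 : r ≤ (1 - ‖a‖)/2 := min_le_right _ _
      linarith
    have hy₁1 : ‖y₁‖ < 1 := by
      have : ‖a‖ < 1 := ha1; linarith
    have hne : y₁ ≠ y₂ := by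
      intro h; rw [h] at hy₁n; linarith
    -- injectivity contradiction
    have heq : f y₁ = f y₂ := by
      rw [← hFeq _ hy₁0, ← hFeq _ hy₂0, hwy₁, hwy₂]
    have hy₁i : 1 < ‖y₁⁻¹‖ := by
      rw [norm_inv, one_lt_inv_iff₀]; exact ⟨norm_pos_iff.2 hy₁0, hy₁1⟩
    have hy₂i : 1 < ‖y₂⁻¹‖ := by
      rw [norm_inv, one_lt_inv_iff₀]; exact ⟨norm_pos_iff.2 hy₂0, hy₂1⟩
    have hgeq : g n y₁⁻¹ = g n y₂⁻¹ := by
      have := congrArg (fun x : ℂ => x⁻¹) heq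
      simpa [hfdef, inv_inv] using this
    have := hinj n hy₁i hy₂i hgeq
    exact hne (by rw [← inv_inv y₁, this, inv_inv])
  -- Schwarz lemma
  have hSchwarz : ∀ y ∈ ball (0:ℂ) 1, ‖F y - y‖ ≤ 2*ε * ‖y‖ := by
    intro y hy
    set h : ℂ → ℂ := fun y => F y - y with hhdef
    have hhd : DifferentiableOn ℂ h (ball (0:ℂ) 1) :=
      hFd.sub differentiableOn_id
    have hh0 : h 0 = 0 := by simp [hhdef, ← hcdef, hc0]
    have hmaps : MapsTo h (ball (0:ℂ) 1) (ball (h 0) (2*ε)) := by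
      intro y hy
      rw [hh0, mem_ball, dist_zero_right]
      rcases eq_or_ne y 0 with rfl | hy0
      · rw [hh0]; simp; linarith
      · rw [hhdef]
        simp only
        rw [hFeq _ hy0]
        have := hfb y hy0 (mem_ball_zero_iff.1 hy)
        have h2ε : ε < 2*ε := by linarith
        exact lt_of_le_of_lt this h2ε
    have := Complex.dist_le_div_mul_dist_of_mapsTo_ball hhd (hmaps.mono_right ball_subset_closedBall) hy
    rw [hh0, dist_eq_norm, sub_zero, dist_eq_norm, sub_zero] at this
    calc ‖F y - y‖ = ‖h y‖ := rfl
      _ ≤ 2*ε / 1 * ‖y‖ := this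
      _ = 2*ε * ‖y‖ := by ring
  -- conclude
  set y : ℂ := z⁻¹ with hydef
  have hz0 : z ≠ 0 := by intro h; rw [h] at hz; simp at hz; linarith
  have hy0 : y ≠ 0 := inv_ne_zero hz0
  have hy1 : ‖y‖ < 1 := by
    rw [hydef, norm_inv, inv_lt_one_iff₀]; right; exact hz
  have hyball : y ∈ ball (0:ℂ) 1 := mem_ball_zero_iff.2 hy1
  set u : ℂ := (g n z)⁻¹ with hudef
  have hgz : g n z ≠ 0 := hA z hz
  have hu0 : u ≠ 0 := inv_ne_zero hgz
  have hFy : F y = u := by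
    rw [hFeq _ hy0, hfdef]; simp only [hydef, inv_inv, hudef]
  have hbound : ‖u - y‖ ≤ 2*ε*‖y‖ := by
    have := hSchwarz y hyball
    rwa [hFy] at this
  have hynorm : (0:ℝ) < ‖y‖ := norm_pos_iff.2 hy0
  have hunorm : ‖y‖/2 ≤ ‖u‖ := by
    have h1 := norm_sub_norm_le y u
    rw [norm_sub_rev] at h1
    have : 2*ε ≤ 2⁻¹ := by linarith
    nlinarith
  have hkey : (g n z - z) / z = (y - u) / u := by
    have hgz' : g n z = u⁻¹ := by rw [hudef, inv_inv]
    have hz' : z = y⁻¹ := by rw [hydef, inv_inv]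
    rw [hgz', hz']
    field_simp
  have : ‖g n z - z‖ / ‖z‖ = ‖y - u‖ / ‖u‖ := by
    rw [← norm_div, hkey, norm_div]
  rw [this]
  have hfinal : ‖y - u‖ / ‖u‖ ≤ (2*ε*‖y‖) / (‖y‖/2) := by
    apply div_le_div₀ (by positivity) (by rwa [norm_sub_rev]) (by positivity) hunorm
  have heq4 : (2*ε*‖y‖) / (‖y‖/2) = 4*ε := by
    rw [div_eq_iff (ne_of_gt (by positivity : (0:ℝ) < ‖y‖/2))]
    ring
  rw [heq4] at hfinal
  linarith
end
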